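/- arXiv:1412.0839 — 6 statements merged into one kernel-verified Lean document; each statement's English description precedes it below -/
import Mathlib

section
/- Let m ≥ 1 be an integer. The language L(A_m) of the tree automaton A_m consists of exactly one term, and this unique term has exactly m leaves, all labelled A. -/
/-- Terms over the ranked alphabet `F₁ = {f, g, A}` where `f` has arity 2,
`g` has arity 3 and `A` is a constant. -/
inductive TermF1 : Type
  | A : TermF1
  | f : TermF1 → TermF1 → TermF1
  | g : TermF1 → TermF1 → TermF1 → TermF1

/-- Number of leaves of a term over `F₁` (all leaves are labelled `A`,
since `A` is the only symbol of arity 0). -/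
def countA : TermF1 → ℕ
  | .A => 1
  | .f t1 t2 => countA t1 + countA t2
  | .g t1 t2 t3 => countA t1 + countA t2 + countA t3

/-- `AmRun α k t i` means `t →*_{A_m} q_i` in the tree automaton `A_m` with
states `q₁, …, q_k` and rules: `A → q₁`; `f(q_i, q_i) → q_{i+1}` for
`1 ≤ i ≤ k-1` with `α_{i+1} = 0`; `g(q_i, q_i, q₁) → q_{i+1}` for
`1 ≤ i ≤ k-1` with `α_{i+1} = 1`. -/
inductive AmRun (α : ℕ → Bool) (k : ℕ) : TermF1 → ℕ → Prop
  | base : AmRun α k .A 1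
  | fstep {t1 t2 : TermF1} {i : ℕ} (h1 : 1 ≤ i) (h2 : i ≤ k - 1)
      (hα : α (i + 1) = false)
      (r1 : AmRun α k t1 i) (r2 : AmRun α k t2 i) : AmRun α k (.f t1 t2) (i + 1)
  | gstep {t1 t2 t3 : TermF1} {i : ℕ} (h1 : 1 ≤ i) (h2 : i ≤ k - 1)
      (hα : α (i + 1) = true)
      (r1 : AmRun α k t1 i) (r2 : AmRun α k t2 i) (r3 : AmRun α k t3 1) :
      AmRun α k (.g t1 t2 t3) (i + 1)

def Tm (α : ℕ → Bool) : ℕ → TermF1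
  | 0 => .A
  | 1 => .A
  | (i+2) => if α (i+2) then .g (Tm α (i+1)) (Tm α (i+1)) .A
             else .f (Tm α (i+1)) (Tm α (i+1))

lemma Tm_succ (α : ℕ → Bool) (i : ℕ) (hi : 1 ≤ i) :
    Tm α (i+1) = if α (i+1) then .g (Tm α i) (Tm α i) .A
                 else .f (Tm α i) (Tm α i) := by
  obtain ⟨j, rfl⟩ : ∃ j, i = j + 1 := ⟨i - 1, (Nat.succ_pred_eq_of_pos hi).symm⟩
  rfl

lemma AmRun_eq_Tm {α : ℕ → Bool} {k : ℕ} :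
    ∀ {t i}, AmRun α k t i → t = Tm α i := by
  intro t i h
  induction h with
  | base => rfl
  | fstep h1 h2 hA r1 r2 ih1 ih2 =>
      rw [Tm_succ α _ h1, hA, ih1, ih2]; simp
  | gstep h1 h2 hA r1 r2 r3 ih1 ih2 ih3 =>
      rw [Tm_succ α _ h1, hA, ih1, ih2, ih3]; simp [Tm]

lemma Tm_run (α : ℕ → Bool) (k : ℕ) :
    ∀ i, 1 ≤ i → i ≤ k → AmRun α k (Tm α i) i := by
  intro i
  induction i with
  | zero => omega
  | succ j ih =>
    intro h1 h2
    rcases Nat.eq_or_lt_of_le h1 with h | h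
    · simpa [Tm, ← h] using AmRun.base (α := α) (k := k)
    · have hj : 1 ≤ j := by omega
      have hjk : j ≤ k := by omega
      rw [Tm_succ α j hj]
      cases hA : α (j+1) with
      | false => simpa [hA] using AmRun.fstep hj (by omega) hA (ih hj hjk) (ih hj hjk)
      | true => simpa [hA] using AmRun.gstep hj (by omega) hA (ih hj hjk) (ih hj hjk) AmRun.base

lemma Tm_count (α : ℕ → Bool) (hα : α 1 = true) :
    ∀ i, 1 ≤ i →
      countA (Tm α i) = ∑ j ∈ Finset.Icc 1 i, if α j then 2 ^ (i - j) else 0 := by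
  intro i
  induction i with
  | zero => omega
  | succ j ih =>
    intro h1
    rcases Nat.eq_or_lt_of_le h1 with h | h
    · simp [Tm, ← h, countA, hα]
    · have hj : 1 ≤ j := by omega
      rw [Tm_succ α j hj, Finset.sum_Icc_succ_top (by omega : 1 ≤ j+1)]
      have hsum : (∑ x ∈ Finset.Icc 1 j, if α x then 2 ^ (j + 1 - x) else 0)
          = 2 * ∑ x ∈ Finset.Icc 1 j, if α x then 2 ^ (j - x) else 0 := by
        rw [Finset.mul_sum]
        refine Finset.sum_congr rfl fun x hx => ?_
        simp only [Finset.mem_Icc] at hx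
        have hjx : j + 1 - x = (j - x) + 1 := by omega
        cases α x <;> simp [hjx, pow_succ, mul_comm]
      cases hA : α (j+1) <;> simp [countA, ih hj, hsum, hA, two_mul]

/-- Let `m ≥ 1` with binary representation `α₁ … α_k`. The language of the tree
automaton `A_m` (terms `t` with `t →*_{A_m} q_k`, where `q_k` is the unique
final state) consists of exactly one term, and this unique term has exactly
`m` leaves, all labelled `A`. -/
theorem Am_language_singleton (α : ℕ → Bool) (k m : ℕ) (hk : 1 ≤ k)
    (hα : α 1 = true)
    (hm : m = ∑ i ∈ Finset.Icc 1 k, if α i then 2 ^ (k - i) else 0) :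
    ∃ T : TermF1, AmRun α k T k ∧ (∀ T' : TermF1, AmRun α k T' k → T' = T) ∧
      countA T = m := by
  refine ⟨Tm α k, Tm_run α k k hk le_rfl, fun T' h => AmRun_eq_Tm h, ?_⟩
  rw [Tm_count α hα k hk, hm]
end

section
/- Let G = (V, E) be a directed graph with V nonempty and let n ≥ 2. A term t over F_2 is accepted by the tree automaton P_G if and only if there exist vertices w_0, …, w_{n−1} ∈ V with (w_i, w_{i+1}) ∈ E for all 0 ≤ i ≤ n−2 such that t = [A_{w_{n−1}} A_{w_{n−2}} … A_{w_1} A_{w_0}]. -/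
/-- Terms over the ranked alphabet `F₂ = {h} ∪ {A_v : v ∈ V}` where `h` has
arity 2 and each `A_v` is a constant. -/
inductive T2 (V : Type*) : Type _
  | A : V → T2 V
  | h : T2 V → T2 V → T2 V

/-- `code k w` is the term `[A_{w_k} A_{w_{k-1}} … A_{w_1} A_{w_0}]`, i.e.
`h(A_{w_k}, h(A_{w_{k-1}}, …, h(A_{w_1}, A_{w_0})…))`; for `k = 0` it is
just `A_{w_0}`. -/
def code {V : Type*} : (k : ℕ) → (Fin (k + 1) → V) → T2 V
  | 0, w => T2.A (w 0)
  | k + 1, w => T2.h (T2.A (w (Fin.last (k + 1)))) (code k (fun i => w i.castSucc))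

/-- `w : Fin (k+1) → V` is a path of length `k` in the directed graph with
edge relation `E`. -/
def IsPath {V : Type*} (E : V → V → Prop) {k : ℕ} (w : Fin (k + 1) → V) : Prop :=
  ∀ i : Fin k, E (w i.castSucc) (w i.succ)

/-- `PRun E n t v i` means `t →*_{P_G} q_v^i` in the tree automaton `P_G`
(with parameter `n`), whose rules are `A_w → q_w^0` for `w ∈ V` and
`h(q_v^0, q_w^i) → q_v^{i+1}` for `0 ≤ i ≤ n-2` and `(w, v) ∈ E`. -/
inductive PRun {V : Type*} (E : V → V → Prop) (n : ℕ) : T2 V → V → ℕ → Prop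
  | base (w : V) : PRun E n (T2.A w) w 0
  | step {t1 t2 : T2 V} {v w : V} {i : ℕ} (hi : i ≤ n - 2) (he : E w v)
      (h1 : PRun E n t1 v 0) (h2 : PRun E n t2 w i) :
      PRun E n (T2.h t1 t2) v (i + 1)

lemma PRun_fwd {V : Type*} {E : V → V → Prop} {n : ℕ} :
    ∀ {t : T2 V} {v : V} {i : ℕ}, PRun E n t v i →
      ∃ w : Fin (i + 1) → V, IsPath E w ∧ t = code i w ∧ w (Fin.last i) = v := by
  intro t v i h
  induction h with
  | base w =>
    exact ⟨fun _ => w, fun j => j.elim0, rfl, rfl⟩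
  | step hi he h1 h2 ih1 ih2 =>
    rename_i t1 t2 v w i
    obtain ⟨w', hp, ht, hl⟩ := ih2
    refine ⟨Fin.snoc w' v, ?_, ?_, by simp [Fin.snoc_last]⟩
    · intro j
      refine Fin.lastCases ?_ ?_ j
      · rw [Fin.succ_last, Fin.snoc_last, Fin.snoc_castSucc, hl]
        exact he
      · intro j'
        rw [Fin.succ_castSucc, Fin.snoc_castSucc, Fin.snoc_castSucc]
        exact hp j'
    · cases h1
      simp only [code, Fin.snoc_last, Fin.snoc_castSucc]
      rw [ht]

lemma PRun_bwd {V : Type*} {E : V → V → Prop} {m : ℕ} :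
    ∀ (k : ℕ), k ≤ m + 1 → ∀ (w : Fin (k + 1) → V), IsPath E w →
      PRun E (m + 2) (code k w) (w (Fin.last k)) k := by
  intro k
  induction k with
  | zero => intro _ w _; exact PRun.base (w 0)
  | succ k ih =>
    intro hk w hp
    have hp' : IsPath E (fun i : Fin (k + 1) => w i.castSucc) := by
      intro j
      simpa only [Fin.succ_castSucc] using hp j.castSucc
    have h2 := ih (Nat.le_of_succ_le hk) _ hp'
    have he : E (w (Fin.last k).castSucc) (w (Fin.last (k + 1))) := by
      simpa [Fin.succ_last] using hp (Fin.last k)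
    exact PRun.step (by omega) he (PRun.base _) h2

/-- Let `G = (V, E)` with `V` nonempty and let `n ≥ 2` (here `n = m + 2`).
A term `t` is accepted by `P_G` (i.e. reaches a final state `q_v^{n-1}`) iff
there are vertices `w_0, …, w_{n-1}` with `(w_i, w_{i+1}) ∈ E` for all
`0 ≤ i ≤ n-2` and `t = [A_{w_{n-1}} A_{w_{n-2}} … A_{w_1} A_{w_0}]`. -/
theorem PG_accepts_iff {V : Type*} [Fintype V] [Nonempty V]
    (E : V → V → Prop) (m : ℕ) (t : T2 V) :
    (∃ v : V, PRun E (m + 2) t v (m + 1)) ↔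
    (∃ w : Fin (m + 2) → V, IsPath E w ∧ t = code (m + 1) w) := by
  constructor
  · rintro ⟨v, h⟩
    obtain ⟨w, hp, ht, -⟩ := PRun_fwd h
    exact ⟨w, hp, ht⟩
  · rintro ⟨w, hp, rfl⟩
    exact ⟨w (Fin.last (m + 1)), PRun_bwd (m + 1) le_rfl w hp⟩
end

section
/- Let G = (V, E) be a directed graph with V nonempty. For any term t over F_2: t →*_{C_G} p_1 if and only if t = [A_{w_k} A_{w_{k−1}} … A_{w_1} A_{w_0}] for some k ≥ 1 and some vertices w_0, …, w_k ∈ V. -/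
/-- The states of the tree automaton `C_G`: `p_w` and `p_w'` for each vertex
`w`, together with `p₀`, `p₁` and the final state `p_f`. -/
inductive CState (V : Type*) : Type _
  | pw : V → CState V
  | pw' : V → CState V
  | p0 : CState V
  | p1 : CState V
  | pf : CState V

/-- `CRun t p` means `t →*_{C_G} p` in the tree automaton `C_G`, whose rules
are: `A_w → p₀`, `A_w → p_w`, `A_w → p_w'` for each `w ∈ V`; `h(p₀,p₀) → p₁`;
`h(p₀,p₁) → p₁`; for each `w ∈ V`: `h(p_w,p₀) → p_w'`, `h(p_w,p₁) → p_w'`,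
`h(p₀,p_w') → p_w'`, `h(p_w,p_w') → p_f`; and `h(p₀,p_f) → p_f`. -/
inductive CRun {V : Type*} : T2 V → CState V → Prop
  | a0 (w : V) : CRun (T2.A w) CState.p0
  | aw (w : V) : CRun (T2.A w) (CState.pw w)
  | aw' (w : V) : CRun (T2.A w) (CState.pw' w)
  | h00 {t1 t2 : T2 V} : CRun t1 CState.p0 → CRun t2 CState.p0 →
      CRun (T2.h t1 t2) CState.p1
  | h01 {t1 t2 : T2 V} : CRun t1 CState.p0 → CRun t2 CState.p1 →
      CRun (T2.h t1 t2) CState.p1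
  | hw0 {t1 t2 : T2 V} (w : V) : CRun t1 (CState.pw w) → CRun t2 CState.p0 →
      CRun (T2.h t1 t2) (CState.pw' w)
  | hw1 {t1 t2 : T2 V} (w : V) : CRun t1 (CState.pw w) → CRun t2 CState.p1 →
      CRun (T2.h t1 t2) (CState.pw' w)
  | h0w' {t1 t2 : T2 V} (w : V) : CRun t1 CState.p0 → CRun t2 (CState.pw' w) →
      CRun (T2.h t1 t2) (CState.pw' w)
  | hww' {t1 t2 : T2 V} (w : V) : CRun t1 (CState.pw w) → CRun t2 (CState.pw' w) →
      CRun (T2.h t1 t2) CState.pf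
  | h0f {t1 t2 : T2 V} : CRun t1 CState.p0 → CRun t2 CState.pf →
      CRun (T2.h t1 t2) CState.pf

lemma CRun_p0_inv {V : Type*} {t : T2 V} (h : CRun t CState.p0) :
    ∃ w, t = T2.A w := by cases h; exact ⟨_, rfl⟩

lemma CRun_p1_forward {V : Type*} {t : T2 V} {s : CState V} (h : CRun t s)
    (hs : s = CState.p1) :
    ∃ k : ℕ, 1 ≤ k ∧ ∃ w : Fin (k + 1) → V, t = code k w := by
  induction h with
  | h00 h1 h2 _ _ =>
    obtain ⟨u, rfl⟩ := CRun_p0_inv h1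
    obtain ⟨v, rfl⟩ := CRun_p0_inv h2
    exact ⟨1, le_refl 1, ![v, u], rfl⟩
  | h01 h1 _ _ ih =>
    obtain ⟨u, rfl⟩ := CRun_p0_inv h1
    obtain ⟨k, hk, w, rfl⟩ := ih rfl
    refine ⟨k + 1, by omega, Fin.snoc w u, ?_⟩
    simp [code, Fin.snoc_last, Fin.snoc_castSucc]
  | a0 => simp at hs
  | aw => simp at hs
  | aw' => simp at hs
  | hw0 => simp at hs
  | hw1 => simp at hs
  | h0w' => simp at hs
  | hww' => simp at hs
  | h0f => simp at hs

lemma CRun_code_p1 {V : Type*} : ∀ (k : ℕ), 1 ≤ k → ∀ (w : Fin (k + 1) → V),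
    CRun (code k w) CState.p1 := by
  intro k
  induction k with
  | zero => omega
  | succ n ih =>
    intro _ w
    cases n with
    | zero => exact CRun.h00 (CRun.a0 _) (CRun.a0 _)
    | succ m => exact CRun.h01 (CRun.a0 _) (ih (by omega) _)

/-- Let `G = (V, E)` with `V` finite and nonempty. For any term `t` over `F₂`:
`t →*_{C_G} p₁` iff `t = [A_{w_k} A_{w_{k-1}} … A_{w_1} A_{w_0}]` for some
`k ≥ 1` and some vertices `w_0, …, w_k ∈ V`. -/
theorem CG_p1_iff {V : Type*} [Fintype V] [Nonempty V] (E : V → V → Prop)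
    (t : T2 V) :
    CRun t CState.p1 ↔
    ∃ k : ℕ, 1 ≤ k ∧ ∃ w : Fin (k + 1) → V, t = code k w := by
  constructor
  · intro h; exact CRun_p1_forward h rfl
  · rintro ⟨k, hk, w, rfl⟩; exact CRun_code_p1 k hk w
end

section
/- Let G = (V, E) be a directed graph with V nonempty. For any vertex w ∈ V and any term t over F_2: t →*_{C_G} p_w' if and only if t = [A_{w_k} A_{w_{k−1}} … A_{w_1} A_{w_0}] for some k ≥ 0 and some vertices w_0, …, w_k ∈ V such that w_i = w for at least one index 0 ≤ i ≤ k. -/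

lemma code_snoc {V : Type*} (k : ℕ) (w : Fin (k + 1) → V) (u : V) :
    code (k + 1) (Fin.snoc w u) = T2.h (T2.A u) (code k w) := by
  simp only [code, Fin.snoc_last]
  rw [show (fun i : Fin (k + 1) => Fin.snoc (α := fun _ => V) w u i.castSucc) = w from
    funext fun i => Fin.snoc_castSucc ..]

lemma run_p0 {V : Type*} {t : T2 V} (h : CRun t CState.p0) : ∃ u, t = T2.A u := by
  cases h; exact ⟨_, rfl⟩

lemma run_pw {V : Type*} {t : T2 V} {v : V} (h : CRun t (CState.pw v)) : t = T2.A v := by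
  cases h; rfl

lemma run_p1 {V : Type*} : ∀ {t : T2 V}, CRun t CState.p1 →
    ∃ (k : ℕ) (w : Fin (k + 2) → V), t = code (k + 1) w := by
  intro t ht
  induction t with
  | A u => cases ht
  | h t1 t2 ih1 ih2 =>
    cases ht with
    | h00 h1 h2 =>
      obtain ⟨u1, rfl⟩ := run_p0 h1
      obtain ⟨u2, rfl⟩ := run_p0 h2
      exact ⟨0, Fin.snoc (fun _ => u2) u1, by rw [code_snoc]; rfl⟩
    | h01 h1 h2 =>
      obtain ⟨u1, rfl⟩ := run_p0 h1
      obtain ⟨k, w, rfl⟩ := ih2 h2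
      exact ⟨k + 1, Fin.snoc w u1, (code_snoc (k + 1) w u1).symm⟩

lemma code_run_p1 {V : Type*} : ∀ (k : ℕ) (w : Fin (k + 2) → V),
    CRun (code (k + 1) w) CState.p1
  | 0, w => CRun.h00 (CRun.a0 _) (CRun.a0 _)
  | k + 1, w => CRun.h01 (CRun.a0 _) (code_run_p1 k _)

/-- Let `G = (V, E)` with `V` finite and nonempty. For any vertex `v ∈ V` and
any term `t` over `F₂`: `t →*_{C_G} p_v'` iff
`t = [A_{w_k} A_{w_{k-1}} … A_{w_1} A_{w_0}]` for some `k ≥ 0` and some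
vertices `w_0, …, w_k ∈ V` with `w_i = v` for at least one index `i`. -/
theorem CG_pw'_iff {V : Type*} [Fintype V] [Nonempty V] (E : V → V → Prop)
    (v : V) (t : T2 V) :
    CRun t (CState.pw' v) ↔
    ∃ (k : ℕ) (w : Fin (k + 1) → V), t = code k w ∧ ∃ i : Fin (k + 1), w i = v := by
  constructor
  · intro ht
    clear E
    induction t with
    | A u =>
      cases ht
      exact ⟨0, fun _ => v, rfl, 0, rfl⟩
    | h t1 t2 ih1 ih2 =>
      cases ht with
      | hw0 _ h1 h2 =>
        obtain rfl := run_pw h1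
        obtain ⟨u, rfl⟩ := run_p0 h2
        exact ⟨1, Fin.snoc (fun _ => u) v, by rw [code_snoc]; rfl,
          Fin.last 1, Fin.snoc_last ..⟩
      | hw1 _ h1 h2 =>
        obtain rfl := run_pw h1
        obtain ⟨k, w, rfl⟩ := run_p1 h2
        exact ⟨k + 2, Fin.snoc w v, (code_snoc (k + 1) w v).symm,
          Fin.last (k + 2), Fin.snoc_last ..⟩
      | h0w' _ h1 h2 =>
        obtain ⟨u, rfl⟩ := run_p0 h1
        obtain ⟨k, w, rfl, i, hi⟩ := ih2 h2
        exact ⟨k + 1, Fin.snoc w u, (code_snoc k w u).symm,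
          i.castSucc, by rw [Fin.snoc_castSucc]; exact hi⟩
  · rintro ⟨k, w, rfl, i, hi⟩
    clear E
    induction k with
    | zero =>
      obtain rfl : i = 0 := Fin.eq_zero i
      rw [show code 0 w = T2.A (w 0) from rfl, hi]
      exact CRun.aw' v
    | succ k ih =>
      rcases Fin.eq_castSucc_or_eq_last i with ⟨j, rfl⟩ | rfl
      · exact CRun.h0w' v (CRun.a0 _) (ih (fun j => w j.castSucc) j hi)
      · rw [show code (k + 1) w
          = T2.h (T2.A (w (Fin.last (k + 1)))) (code k fun j => w j.castSucc) from rfl, hi]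
        cases k with
        | zero => exact CRun.hw0 v (CRun.aw v) (CRun.a0 _)
        | succ k => exact CRun.hw1 v (CRun.aw v) (code_run_p1 k _)
end

section
/- Let G = (V, E) be a directed graph with n = |V| ≥ 2 vertices, and instantiate P_G with this n. Then L(P_G) ∩ L(C_G) is exactly the set of terms [A_{w_{n−1}} A_{w_{n−2}} … A_{w_1} A_{w_0}] such that (w_0, …, w_{n−1}) is a path of length n−1 in G that visits some vertex at least twice, i.e., exactly the encodings of the non-Hamiltonian paths of length n−1 in G. -/
section Aux

variable {V : Type*}

lemma crun_p0_or_p1 : ∀ (k : ℕ) (w : Fin (k + 1) → V),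
    CRun (code k w) CState.p0 ∨ CRun (code k w) CState.p1
  | 0, w => Or.inl (CRun.a0 _)
  | 1, w => Or.inr (CRun.h00 (CRun.a0 _) (CRun.a0 _))
  | (k + 2), w => by
    rcases crun_p0_or_p1 (k + 1) (fun i => w i.castSucc) with h | h
    · cases h
    · exact Or.inr (CRun.h01 (CRun.a0 _) h)

lemma crun_pw' : ∀ (k : ℕ) (w : Fin (k + 1) → V) (i : Fin (k + 1)),
    CRun (code k w) (CState.pw' (w i))
  | 0, w, i => by
    have : i = 0 := Fin.fin_one_eq_zero i
    subst this; exact CRun.aw' _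
  | (k + 1), w, i => by
    by_cases hi : i = Fin.last (k + 1)
    · subst hi
      rcases crun_p0_or_p1 k (fun i => w i.castSucc) with h | h
      · exact CRun.hw0 _ (CRun.aw _) h
      · exact CRun.hw1 _ (CRun.aw _) h
    · have hlt : (i : ℕ) < k + 1 := by
        rcases lt_or_eq_of_le (Nat.lt_succ_iff.mp i.2) with h | h
        · exact h
        · exact absurd (Fin.ext h) hi
      have := crun_pw' k (fun j => w j.castSucc) ⟨i, hlt⟩
      have heq : w (Fin.castSucc ⟨(i : ℕ), hlt⟩) = w i := congrArg w (Fin.ext rfl)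
      rw [heq] at this
      exact CRun.h0w' _ (CRun.a0 _) this

lemma crun_pf_of_rep : ∀ (k : ℕ) (w : Fin (k + 1) → V) (i j : Fin (k + 1)),
    i < j → w i = w j → CRun (code k w) CState.pf
  | 0, w, i, j, hlt, _ =>
    absurd ((Fin.fin_one_eq_zero i).trans (Fin.fin_one_eq_zero j).symm) (ne_of_lt hlt)
  | (k + 1), w, i, j, hlt, heq => by
    by_cases hj : j = Fin.last (k + 1)
    · subst hj
      have hi : (i : ℕ) < k + 1 := hlt
      have h2 := crun_pw' k (fun x => w x.castSucc) ⟨i, hi⟩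
      have heq2 : w (Fin.castSucc ⟨(i : ℕ), hi⟩) = w (Fin.last (k + 1)) := by
        rw [← heq]; exact congrArg w (Fin.ext rfl)
      rw [heq2] at h2
      exact CRun.hww' _ (CRun.aw _) h2
    · have hjlt : (j : ℕ) < k + 1 := by
        rcases lt_or_eq_of_le (Nat.lt_succ_iff.mp j.2) with h | h
        · exact h
        · exact absurd (Fin.ext h) hj
      have hilt : (i : ℕ) < k + 1 := lt_trans hlt hjlt
      have := crun_pf_of_rep k (fun x => w x.castSucc) ⟨i, hilt⟩ ⟨j, hjlt⟩
        hlt (by simpa [Fin.castSucc, Fin.ext_iff] using heq)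
      exact CRun.h0f (CRun.a0 _) this

lemma crun_pw_inv {u v : V} (h : CRun (T2.A u) (CState.pw v)) : v = u := by
  cases h; rfl

lemma crun_pw'_inv : ∀ (k : ℕ) (w : Fin (k + 1) → V) (v : V),
    CRun (code k w) (CState.pw' v) → ∃ i : Fin (k + 1), w i = v
  | 0, w, v, h => by
    cases h; exact ⟨0, rfl⟩
  | (k + 1), w, v, h => by
    cases h with
    | hw0 _ h1 _ => exact ⟨Fin.last (k + 1), (crun_pw_inv h1).symm⟩
    | hw1 _ h1 _ => exact ⟨Fin.last (k + 1), (crun_pw_inv h1).symm⟩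
    | h0w' _ _ h2 =>
      obtain ⟨i, hi⟩ := crun_pw'_inv k _ v h2
      exact ⟨i.castSucc, hi⟩

lemma crun_pf_inv : ∀ (k : ℕ) (w : Fin (k + 1) → V),
    CRun (code k w) CState.pf → ∃ i j : Fin (k + 1), i ≠ j ∧ w i = w j
  | 0, w, h => by cases h
  | (k + 1), w, h => by
    cases h with
    | hww' v h1 h2 =>
      obtain ⟨i, hi⟩ := crun_pw'_inv k _ v h2
      refine ⟨i.castSucc, Fin.last (k + 1), ?_, ?_⟩
      · exact ne_of_lt (Fin.castSucc_lt_last i)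
      · rw [hi, crun_pw_inv h1]
    | h0f _ h2 =>
      obtain ⟨i, j, hne, heq⟩ := crun_pf_inv k _ h2
      exact ⟨i.castSucc, j.castSucc, fun hc => hne (Fin.castSucc_injective _ hc), heq⟩

lemma prun_code (E : V → V → Prop) (m : ℕ) :
    ∀ (k : ℕ) (w : Fin (k + 1) → V), k ≤ m + 1 →
      (∀ j : Fin k, E (w j.castSucc) (w j.succ)) →
      PRun E (m + 2) (code k w) (w (Fin.last k)) k
  | 0, w, _, _ => PRun.base _
  | (k + 1), w, hk, hpath => by
    have ih := prun_code E m k (fun i => w i.castSucc) (by omega)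
      (fun j => by
        have := hpath j.castSucc
        simpa only [Fin.succ_castSucc] using this)
    have he : E (w (Fin.last k).castSucc) (w (Fin.last (k + 1))) := by
      have := hpath (Fin.last k)
      simpa using this
    exact PRun.step (by omega) he (PRun.base _) ih

lemma prun_inv {E : V → V → Prop} {n : ℕ} {t : T2 V} {v : V} {i : ℕ}
    (h : PRun E n t v i) :
    ∃ w : Fin (i + 1) → V, t = code i w ∧ w (Fin.last i) = v ∧
      ∀ j : Fin i, E (w j.castSucc) (w j.succ) := by
  induction h with
  | base u => exact ⟨fun _ => u, rfl, rfl, fun j => j.elim0⟩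
  | @step t1 t2 v w i _ he _ _ ih1 ih2 =>
    obtain ⟨w1, ht1, hw1, _⟩ := ih1
    obtain ⟨w2, ht2, hw2, hpath2⟩ := ih2
    refine ⟨Fin.snoc w2 v, ?_, ?_, ?_⟩
    · have ht1' : t1 = T2.A v := by rw [ht1, ← hw1]; rfl
      rw [ht1', ht2]
      have hkey : code (i + 1) (Fin.snoc w2 v) = T2.h (T2.A v) (code i w2) := by
        simp only [code, Fin.snoc_last]
        have hw' : (fun x : Fin (i + 1) => (Fin.snoc w2 v : Fin (i + 2) → V) x.castSucc) = w2 :=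
          funext fun x => @Fin.snoc_castSucc (i + 1) (fun _ => V) v w2 x
        rw [hw']
      rw [hkey]
    · rw [Fin.snoc_last]
    · intro j
      rw [Fin.snoc_castSucc]
      by_cases hj : j = Fin.last i
      · subst hj
        have : (Fin.last i : Fin (i + 1)).succ = Fin.last (i + 1) := rfl
        rw [this, Fin.snoc_last, hw2]
        exact he
      · have hjlt : (j : ℕ) < i := by
          rcases lt_or_eq_of_le (Nat.lt_succ_iff.mp j.2) with h | h
          · exact h
          · exact absurd (Fin.ext h) hj
        have hsucc : j.succ = Fin.castSucc ⟨(j : ℕ) + 1, by omega⟩ := Fin.ext rfl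
        rw [hsucc, Fin.snoc_castSucc]
        have := hpath2 ⟨(j : ℕ), hjlt⟩
        have e1 : Fin.castSucc (⟨(j : ℕ), hjlt⟩ : Fin i) = j := Fin.ext rfl
        have e2 : Fin.succ (⟨(j : ℕ), hjlt⟩ : Fin i) = ⟨(j : ℕ) + 1, by omega⟩ :=
          Fin.ext rfl
        rw [e1, e2] at this
        exact this

end Aux

/-- Let `G = (V, E)` be a directed graph with `n = |V| ≥ 2` vertices (here
`n = m + 2`), and instantiate `P_G` with this `n`. Then `L(P_G) ∩ L(C_G)` is
exactly the set of terms `[A_{w_{n-1}} A_{w_{n-2}} … A_{w_1} A_{w_0}]` such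
that `(w_0, …, w_{n-1})` is a path of length `n-1` in `G` visiting some vertex
at least twice, i.e. exactly the encodings of the non-Hamiltonian paths of
length `n-1` in `G`. -/
theorem PG_inter_CG {V : Type*} [Fintype V] [Nonempty V] (E : V → V → Prop)
    (m : ℕ) (hcard : Fintype.card V = m + 2) (t : T2 V) :
    ((∃ v : V, PRun E (m + 2) t v (m + 1)) ∧ CRun t CState.pf) ↔
    ∃ w : Fin (m + 2) → V, IsPath E w ∧
      (∃ i j : Fin (m + 2), i ≠ j ∧ w i = w j) ∧ t = code (m + 1) w := by
  constructor
  · rintro ⟨⟨v, hp⟩, hc⟩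
    obtain ⟨w, ht, _, hpath⟩ := prun_inv hp
    subst ht
    obtain ⟨i, j, hne, heq⟩ := crun_pf_inv _ _ hc
    exact ⟨w, hpath, ⟨i, j, hne, heq⟩, rfl⟩
  · rintro ⟨w, hpath, ⟨i, j, hne, heq⟩, rfl⟩
    refine ⟨⟨w (Fin.last (m + 1)), prun_code E m (m + 1) w le_rfl hpath⟩, ?_⟩
    rcases lt_or_gt_of_ne hne with h | h
    · exact crun_pf_of_rep _ _ i j h heq
    · exact crun_pf_of_rep _ _ j i h heq.symm
end

section
/- Let m ≥ 1, let A_m = (Q_1, Δ_1, {q_k}) be the tree automaton over F_1 associated with m, and let B = (Q, Δ, {q_1}) be a tree automaton over a ranked alphabet F' disjoint from F_1, with unique final state q_1 and Q ∩ Q_1 = {q_1}. Let D = (Q ∪ Q_1, (Δ ∪ Δ_1) \ {A → q_1}, {q_k}) over F_1 ∪ F'. Then the terms accepted by D are exactly the terms obtained from the unique term of L(A_m) by replacing each of its m leaves (all labelled A) by some term of L(B) (the m replacing terms being chosen independently). -/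
/-- Terms over a ranked alphabet: a set `S` of symbols with arity function
`ar`; a term is a symbol applied to as many subterms as its arity. -/
inductive Term (S : Type*) (ar : S → ℕ) : Type _
  | node (s : S) (c : Fin (ar s) → Term S ar) : Term S ar

/-- A (bottom-up) tree automaton over the ranked alphabet `(S, ar)` with state
type `Q`: a set of rules `f(q₁, …, q_n) → q` and a set of final states. -/
structure TreeAut (S : Type*) (ar : S → ℕ) (Q : Type*) where
  rules : Set (Σ s : S, (Fin (ar s) → Q) × Q)
  final : Set Q

/-- The subterm of `t` at position `p` (a list of child indices), if any. -/
def subtermAt {S : Type*} {ar : S → ℕ} : Term S ar → List ℕ → Option (Term S ar)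
  | t, [] => some t
  | Term.node s c, i :: p => if h : i < ar s then subtermAt (c ⟨i, h⟩) p else none

/-- `ρ` is a run of the automaton `A` on the term `t`: at every position of
`t` carrying a symbol `s`, the rule `s(ρ(p·1), …, ρ(p·n)) → ρ(p)` is in `A`. -/
def IsRun {S : Type*} {ar : S → ℕ} {Q : Type*} (A : TreeAut S ar Q)
    (t : Term S ar) (ρ : List ℕ → Q) : Prop :=
  ∀ (p : List ℕ) (s : S) (c : Fin (ar s) → Term S ar),
    subtermAt t p = some (Term.node s c) →
    (⟨s, (fun i => ρ (p ++ [i.val]), ρ p)⟩ : Σ s : S, (Fin (ar s) → Q) × Q) ∈ A.rules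

/-- `t` is accepted by the tree automaton `A`: some run on `t` labels the
root with a final state. -/
def Accepts {S : Type*} {ar : S → ℕ} {Q : Type*} (A : TreeAut S ar Q)
    (t : Term S ar) : Prop :=
  ∃ ρ : List ℕ → Q, IsRun A t ρ ∧ ρ [] ∈ A.final

/-- `t` is accepted by the TAGED `(A, R₁, R₂)`: some accepting run `ρ` on `t`
satisfies the global equality constraints `R₁` and disequality constraints
`R₂` on subterms. -/
def TagedAccepts {S : Type*} {ar : S → ℕ} {Q : Type*} (A : TreeAut S ar Q)
    (R1 R2 : Set (Q × Q)) (t : Term S ar) : Prop :=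
  ∃ ρ : List ℕ → Q, IsRun A t ρ ∧ ρ [] ∈ A.final ∧
    ∀ (p q : List ℕ) (tp tq : Term S ar),
      subtermAt t p = some tp → subtermAt t q = some tq →
      (((ρ p, ρ q) ∈ R1 → tp = tq) ∧ (p ≠ q → (ρ p, ρ q) ∈ R2 → tp ≠ tq))

/-- The ranked alphabet `F₁ = {f, g, A}`. -/
inductive F1Sym : Type
  | f : F1Sym
  | g : F1Sym
  | A : F1Sym

/-- Arities in `F₁`: `f` has arity 2, `g` has arity 3, `A` has arity 0. -/
def ar1 : F1Sym → ℕ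
  | .f => 2
  | .g => 3
  | .A => 0

/-- Arity function on the (disjoint) union alphabet `F₁ ∪ F'`. -/
def arU {S' : Type*} (ar' : S' → ℕ) : F1Sym ⊕ S' → ℕ :=
  Sum.elim ar1 ar'

/-- The states of the automaton `D`: the union `Q ∪ Q₁` where
`Q₁ = {q_1, …, q_k}` are the states of `A_m` and the state `q_1` of `A_m` is
identified with the (final) state `q1` of `B`.  `stD q1 i` is the state `q_i`
of `A_m` viewed in this union. -/
def stD {Q : Type*} (q1 : Q) (i : ℕ) : Q ⊕ ℕ :=
  if i = 1 then Sum.inl q1 else Sum.inr i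

/-- The automaton `D = (Q ∪ Q₁, (Δ ∪ Δ₁) \ {A → q₁}, {q_k})` over `F₁ ∪ F'`:
its rules are the rules of `B` (with states embedded on the left) together
with the rules of `A_m` other than `A → q₁` (for `m` with binary
representation `α₁ … α_k`), and its unique final state is `q_k`. -/
def DAut {S' : Type*} (ar' : S' → ℕ) {Q : Type*} (B : TreeAut S' ar' Q)
    (q1 : Q) (α : ℕ → Bool) (k : ℕ) : TreeAut (F1Sym ⊕ S') (arU ar') (Q ⊕ ℕ) where
  rules := {r |
    (∃ (s : S') (qs : Fin (ar' s) → Q) (q : Q),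
      (⟨s, (qs, q)⟩ : Σ s : S', (Fin (ar' s) → Q) × Q) ∈ B.rules ∧
      r = ⟨Sum.inr s, (fun i => Sum.inl (qs i), Sum.inl q)⟩)
    ∨ (∃ i : ℕ, 1 ≤ i ∧ i ≤ k - 1 ∧ α (i + 1) = false ∧
      r = ⟨Sum.inl F1Sym.f, (fun _ => stD q1 i, stD q1 (i + 1))⟩)
    ∨ (∃ i : ℕ, 1 ≤ i ∧ i ≤ k - 1 ∧ α (i + 1) = true ∧
      r = ⟨Sum.inl F1Sym.g,
        (fun j => if j.val = 2 then stD q1 1 else stD q1 i, stD q1 (i + 1))⟩)}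
  final := {stD q1 k}

/-- The tree automaton `A_m` over `F₁` for `m` with binary representation
`α₁ … α_k`: states `q₁, …, q_k` (represented by natural numbers), final state
`q_k`, and rules `A → q₁`; `f(q_i, q_i) → q_{i+1}` for `1 ≤ i ≤ k-1` with
`α_{i+1} = 0`; `g(q_i, q_i, q₁) → q_{i+1}` for `1 ≤ i ≤ k-1` with
`α_{i+1} = 1`. -/
def AmAut (α : ℕ → Bool) (k : ℕ) : TreeAut F1Sym ar1 ℕ where
  rules := {r |
    r = ⟨F1Sym.A, (fun i => i.elim0, 1)⟩
    ∨ (∃ i : ℕ, 1 ≤ i ∧ i ≤ k - 1 ∧ α (i + 1) = false ∧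
      r = ⟨F1Sym.f, (fun _ => i, i + 1)⟩)
    ∨ (∃ i : ℕ, 1 ≤ i ∧ i ≤ k - 1 ∧ α (i + 1) = true ∧
      r = ⟨F1Sym.g, (fun j => if j.val = 2 then 1 else i, i + 1)⟩)}
  final := {k}

/-- The embedding of terms over `F'` into terms over `F₁ ∪ F'`. -/
def embed {S' : Type*} (ar' : S' → ℕ) : Term S' ar' → Term (F1Sym ⊕ S') (arU ar')
  | .node s c => .node (Sum.inr s) (fun i => embed ar' (c i))

/-- `Repl L T t`: the term `t` (over `F₁ ∪ F'`) is obtained from the term `T`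
(over `F₁`) by replacing each leaf of `T` (all labelled `A`) by some term of
`L`, the replacing terms being chosen independently. -/
inductive Repl {S' : Type*} {ar' : S' → ℕ}
    (L : Set (Term (F1Sym ⊕ S') (arU ar'))) :
    Term F1Sym ar1 → Term (F1Sym ⊕ S') (arU ar') → Prop
  | leaf {c : Fin (ar1 F1Sym.A) → Term F1Sym ar1}
      {t : Term (F1Sym ⊕ S') (arU ar')} (ht : t ∈ L) :
      Repl L (Term.node F1Sym.A c) t
  | fnode {c : Fin (ar1 F1Sym.f) → Term F1Sym ar1}
      {c' : Fin (arU ar' (Sum.inl F1Sym.f)) → Term (F1Sym ⊕ S') (arU ar')}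
      (hc : ∀ i : Fin (ar1 F1Sym.f), Repl L (c i) (c' ⟨i.val, i.isLt⟩)) :
      Repl L (Term.node F1Sym.f c) (Term.node (Sum.inl F1Sym.f) c')
  | gnode {c : Fin (ar1 F1Sym.g) → Term F1Sym ar1}
      {c' : Fin (arU ar' (Sum.inl F1Sym.g)) → Term (F1Sym ⊕ S') (arU ar')}
      (hc : ∀ i : Fin (ar1 F1Sym.g), Repl L (c i) (c' ⟨i.val, i.isLt⟩)) :
      Repl L (Term.node F1Sym.g c) (Term.node (Sum.inl F1Sym.g) c')

section Aux

variable {S : Type*} {ar : S → ℕ} {Qs : Type*}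

lemma subtermAt_nil (t : Term S ar) : subtermAt t [] = some t := by cases t; rfl

lemma subtermAt_cons (s : S) (c : Fin (ar s) → Term S ar) (i : Fin (ar s)) (p : List ℕ) :
    subtermAt (Term.node s c) (i.val :: p) = subtermAt (c i) p := by
  simp [subtermAt, i.isLt]

lemma isRun_child (A : TreeAut S ar Qs) (s : S) (c : Fin (ar s) → Term S ar)
    (ρ : List ℕ → Qs) (h : IsRun A (Term.node s c) ρ) (i : Fin (ar s)) :
    IsRun A (c i) (fun p => ρ (i.val :: p)) := by
  intro p s' c' hp
  have := h (i.val :: p) s' c' (by rw [subtermAt_cons]; exact hp)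
  exact this

/-- Glue child runs into a run on a node. -/
def glue (s : S) (ρc : Fin (ar s) → (List ℕ → Qs)) (q0 : Qs) : List ℕ → Qs
  | [] => q0
  | i :: p => if h : i < ar s then ρc ⟨i, h⟩ p else q0

lemma isRun_glue (A : TreeAut S ar Qs) (s : S) (c : Fin (ar s) → Term S ar)
    (ρc : Fin (ar s) → (List ℕ → Qs)) (q0 : Qs)
    (hc : ∀ i, IsRun A (c i) (ρc i))
    (hr : (⟨s, (fun i => ρc i [], q0)⟩ : Σ s : S, (Fin (ar s) → Qs) × Qs) ∈ A.rules) :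
    IsRun A (Term.node s c) (glue s ρc q0) := by
  intro p s' c' hp
  match p with
  | [] =>
    rw [subtermAt_nil, Option.some_inj] at hp
    injection hp with hs hcc
    subst hs
    have hcc' := eq_of_heq hcc; subst hcc'
    have hfun : (fun i : Fin (ar s) => glue s ρc q0 ([] ++ [i.val])) = fun i => ρc i [] := by
      funext i
      simp [glue, i.isLt]
    have h0 : glue s ρc q0 [] = q0 := rfl
    rw [hfun, h0]
    exact hr
  | i :: p =>
    by_cases h : i < ar s
    · have hp' : subtermAt (c ⟨i, h⟩) p = some (Term.node s' c') := by
        simpa [subtermAt, h] using hp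
      have key := hc ⟨i, h⟩ p s' c' hp'
      have e1 : ∀ l, glue s ρc q0 (i :: l) = ρc ⟨i, h⟩ l := fun l => by simp [glue, h]
      simp only [List.cons_append, e1]
      exact key
    · simp [subtermAt, h] at hp

lemma stD_inj {Q : Type*} (q1 : Q) {a b : ℕ} (h : stD q1 a = stD q1 b) : a = b := by
  unfold stD at h
  split at h <;> split at h <;> simp_all

end Aux

section Main

variable {S' : Type*} {ar' : S' → ℕ} {Q : Type*}

lemma subtermAt_embed (ar' : S' → ℕ) (tb : Term S' ar') (p : List ℕ) :
    subtermAt (embed ar' tb) p = Option.map (embed ar') (subtermAt tb p) := by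
  induction tb generalizing p with
  | node s c ih =>
    match p with
    | [] => rfl
    | i :: p =>
      show subtermAt (Term.node (Sum.inr s) fun j => embed ar' (c j)) (i :: p) = _
      by_cases h : i < ar' s
      · have h' : i < arU ar' (Sum.inr s) := h
        rw [subtermAt, dif_pos h', subtermAt, dif_pos h]
        exact ih ⟨i, h⟩ p
      · have h' : ¬ i < arU ar' (Sum.inr s) := h
        rw [subtermAt, dif_neg h', subtermAt, dif_neg h]
        rfl

lemma embed_isRun (B : TreeAut S' ar' Q) (q1 : Q) (α : ℕ → Bool) (k : ℕ)
    (tb : Term S' ar') (σ : List ℕ → Q) (h : IsRun B tb σ) :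
    IsRun (DAut ar' B q1 α k) (embed ar' tb) (fun p => Sum.inl (σ p)) := by
  intro p s c hp
  rw [subtermAt_embed] at hp
  obtain ⟨u, hu, he⟩ := Option.map_eq_some_iff.mp hp
  obtain ⟨s0, c0⟩ := u
  rw [show embed ar' (Term.node s0 c0) = Term.node (Sum.inr s0) (fun i => embed ar' (c0 i)) from rfl] at he
  injection he with hs hc
  subst hs
  have hc' := eq_of_heq hc; subst hc'
  exact Or.inl ⟨s0, _, _, h p s0 c0 hu, rfl⟩

/-- If a run of `D` ends in a left (B-)state, the term is an embedded B-term. -/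
lemma inl_run_embed (B : TreeAut S' ar' Q) (q1 : Q) (α : ℕ → Bool) (k : ℕ) :
    ∀ (t : Term (F1Sym ⊕ S') (arU ar')) (ρ : List ℕ → Q ⊕ ℕ),
    IsRun (DAut ar' B q1 α k) t ρ → ∀ q : Q, ρ [] = Sum.inl q →
    ∃ tb : Term S' ar', (∃ σ, IsRun B tb σ ∧ σ [] = q) ∧ t = embed ar' tb := by
  intro t
  induction t with
  | node s0 c ih =>
    intro ρ hρ q hq
    have h0 := hρ [] s0 c rfl
    simp only [DAut, Set.mem_setOf_eq] at h0
    rcases h0 with ⟨s, qs, q', hb, hr⟩ | ⟨i', hi1, hik, hα0, hr⟩ | ⟨i', hi1, hik, hα0, hr⟩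
    · injection hr with hr1 hr2
      subst hr1
      have hr3 := eq_of_heq hr2
      have hf := congrArg Prod.fst hr3
      have hqv := congrArg Prod.snd hr3
      simp only at hf hqv
      rw [hq] at hqv
      have hq' : q' = q := (Sum.inl.injEq _ _ ▸ hqv.symm)
      subst hq'
      have hch : ∀ i : Fin (ar' s),
          ∃ tb : Term S' ar', (∃ σ, IsRun B tb σ ∧ σ [] = qs i) ∧ c i = embed ar' tb := by
        intro i
        refine ih i (fun p => ρ (i.val :: p)) (isRun_child _ _ _ _ hρ i) (qs i) ?_
        have := congrFun hf i
        simpa using this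
      choose tb hσ hce using hch
      choose σc hσc1 hσc2 using hσ
      refine ⟨Term.node s tb, ⟨glue s σc q', ?_, rfl⟩, ?_⟩
      · refine isRun_glue B s tb σc q' hσc1 ?_
        have : (fun i => σc i []) = qs := funext fun i => hσc2 i
        rw [this]
        exact hb
      · show Term.node (Sum.inr s) c = Term.node (Sum.inr s) fun i => embed ar' (tb i)
        congr 1
        funext i
        exact hce i
    · exfalso
      injection hr with hr1 hr2
      subst hr1
      have hqv := congrArg Prod.snd (eq_of_heq hr2)
      simp only at hqv
      rw [hq] at hqv
      have : i' + 1 ≠ 1 := by omega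
      simp [stD, this, show i' ≠ 0 by omega] at hqv
    · exfalso
      injection hr with hr1 hr2
      subst hr1
      have hqv := congrArg Prod.snd (eq_of_heq hr2)
      simp only at hqv
      rw [hq] at hqv
      have : i' + 1 ≠ 1 := by omega
      simp [stD, this, show i' ≠ 0 by omega] at hqv

end Main
section Main2

variable {S' : Type*} {ar' : S' → ℕ} {Q : Type*}

lemma fwd (B : TreeAut S' ar' Q) (q1 : Q) (hBf : B.final = {q1}) (α : ℕ → Bool) (k : ℕ) :
    ∀ (t : Term (F1Sym ⊕ S') (arU ar')) (ρ : List ℕ → Q ⊕ ℕ),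
    IsRun (DAut ar' B q1 α k) t ρ → ∀ i : ℕ, 1 ≤ i → ρ [] = stD q1 i →
    ∃ T' : Term F1Sym ar1, (∃ σ : List ℕ → ℕ, IsRun (AmAut α k) T' σ ∧ σ [] = i) ∧
      Repl {u | ∃ tb : Term S' ar', Accepts B tb ∧ u = embed ar' tb} T' t := by
  intro t
  induction t with
  | node s0 c ih =>
    intro ρ hρ i hi1 hqi
    rcases eq_or_lt_of_le hi1 with h1 | h2
    · -- i = 1 : B part
      have hq1 : ρ [] = Sum.inl q1 := by rw [hqi, ← h1]; rfl
      obtain ⟨tb, ⟨σb, hσb, hσb1⟩, hte⟩ :=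
        inl_run_embed B q1 α k (Term.node s0 c) ρ hρ q1 hq1
      refine ⟨Term.node F1Sym.A (fun j => j.elim0), ⟨fun _ => 1, ?_, h1.symm ▸ rfl⟩, ?_⟩
      · intro p s c' hp
        match p with
        | [] =>
          rw [subtermAt_nil, Option.some_inj] at hp
          injection hp with hs hcc
          subst hs
          have h0 : (fun j : Fin (ar1 F1Sym.A) => (1:ℕ)) =
              fun j : Fin (ar1 F1Sym.A) => j.elim0 := funext fun j => j.elim0
          exact Or.inl (by rw [← h0])
        | j :: p => simp [subtermAt, ar1] at hp
      · exact Repl.leaf ⟨tb, ⟨σb, hσb, by rw [hBf, hσb1]; rfl⟩, hte⟩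
    · -- i ≥ 2
      have hne1 : i ≠ 1 := by omega
      have hqi' : ρ [] = Sum.inr i := by rw [hqi]; simp [stD, hne1]
      have h0 := hρ [] s0 c rfl
      simp only [DAut, Set.mem_setOf_eq] at h0
      rcases h0 with ⟨s, qs, q', hb, hr⟩ | ⟨i', hi'1, hik, hα0, hr⟩ | ⟨i', hi'1, hik, hα0, hr⟩
      · exfalso
        injection hr with hr1 hr2
        subst hr1
        have hqv := congrArg Prod.snd (eq_of_heq hr2)
        simp only at hqv
        rw [hqi'] at hqv
        simp at hqv
      · -- f rule
        injection hr with hr1 hr2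
        subst hr1
        have hr3 := eq_of_heq hr2
        have hf := congrArg Prod.fst hr3
        have hqv := congrArg Prod.snd hr3
        simp only at hf hqv
        have hieq : i = i' + 1 := stD_inj q1 (hqi ▸ hqv)
        have hch := fun j : Fin (arU ar' (Sum.inl F1Sym.f)) =>
          ih j (fun p => ρ (j.val :: p)) (isRun_child _ _ _ _ hρ j) i' hi'1
            (by have := congrFun hf j; simpa using this)
        choose Tc hTc hRc using hch
        choose σc hσc1 hσc2 using hTc
        refine ⟨Term.node F1Sym.f Tc, ⟨glue (ar := ar1) F1Sym.f σc (i' + 1), ?_, by rw [hieq]; rfl⟩, ?_⟩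
        · refine isRun_glue (AmAut α k) F1Sym.f Tc σc (i' + 1) hσc1 ?_
          refine Or.inr (Or.inl ⟨i', hi'1, hik, hα0, ?_⟩)
          have : (fun j : Fin (ar1 F1Sym.f) => σc j []) = (fun _ : Fin (ar1 F1Sym.f) => i') :=
            funext fun j => hσc2 j
          rw [this]
        · exact Repl.fnode (fun j => hRc ⟨j.val, j.isLt⟩)
      · -- g rule
        injection hr with hr1 hr2
        subst hr1
        have hr3 := eq_of_heq hr2
        have hf := congrArg Prod.fst hr3
        have hqv := congrArg Prod.snd hr3
        simp only at hf hqv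
        have hieq : i = i' + 1 := stD_inj q1 (hqi ▸ hqv)
        have hch := fun j : Fin (arU ar' (Sum.inl F1Sym.g)) =>
          ih j (fun p => ρ (j.val :: p)) (isRun_child _ _ _ _ hρ j)
            (if j.val = 2 then 1 else i') (by split <;> omega)
            (by
              have := congrFun hf j
              simp only [List.nil_append] at this
              show ρ [j.val] = _
              rw [this]
              split <;> rfl)
        choose Tc hTc hRc using hch
        choose σc hσc1 hσc2 using hTc
        refine ⟨Term.node F1Sym.g Tc, ⟨glue (ar := ar1) F1Sym.g σc (i' + 1), ?_, by rw [hieq]; rfl⟩, ?_⟩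
        · refine isRun_glue (AmAut α k) F1Sym.g Tc σc (i' + 1) hσc1 ?_
          refine Or.inr (Or.inr ⟨i', hi'1, hik, hα0, ?_⟩)
          have : (fun j : Fin (ar1 F1Sym.g) => σc j []) =
              (fun j : Fin (ar1 F1Sym.g) => if j.val = 2 then 1 else i') :=
            funext fun j => hσc2 j
          rw [this]
        · exact Repl.gnode (fun j => hRc ⟨j.val, j.isLt⟩)

lemma bwd (B : TreeAut S' ar' Q) (q1 : Q) (hBf : B.final = {q1}) (α : ℕ → Bool) (k : ℕ)
    (T' : Term F1Sym ar1) (t : Term (F1Sym ⊕ S') (arU ar'))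
    (h : Repl {u | ∃ tb : Term S' ar', Accepts B tb ∧ u = embed ar' tb} T' t) :
    ∀ σ : List ℕ → ℕ, IsRun (AmAut α k) T' σ →
    ∃ ρ, IsRun (DAut ar' B q1 α k) t ρ ∧ ρ [] = stD q1 (σ []) := by
  induction h with
  | @leaf c t ht =>
    intro σ hσ
    obtain ⟨tb, ⟨τ, hτ, hτf⟩, rfl⟩ := ht
    have hτ1 : τ [] = q1 := by rw [hBf] at hτf; exact hτf
    have h0 := hσ [] F1Sym.A c rfl
    simp only [AmAut, Set.mem_setOf_eq] at h0
    rcases h0 with hr | ⟨i', hi'1, hik, hα0, hr⟩ | ⟨i', hi'1, hik, hα0, hr⟩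
    · injection hr with hr1 hr2
      have hσ0 : σ [] = 1 := congrArg Prod.snd hr2
      refine ⟨fun p => Sum.inl (τ p), embed_isRun B q1 α k tb τ hτ, ?_⟩
      show Sum.inl (τ []) = stD q1 (σ [])
      rw [hσ0, hτ1]; rfl
    · injection hr with hr1 hr2; exact F1Sym.noConfusion hr1
    · injection hr with hr1 hr2; exact F1Sym.noConfusion hr1
  | @fnode c c' hc ih =>
    intro σ hσ
    have h0 := hσ [] F1Sym.f c rfl
    simp only [AmAut, Set.mem_setOf_eq] at h0
    rcases h0 with hr | ⟨i', hi'1, hik, hα0, hr⟩ | ⟨i', hi'1, hik, hα0, hr⟩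
    · injection hr with hr1 hr2; exact F1Sym.noConfusion hr1
    · injection hr with hr1 hr2
      have hf := congrArg Prod.fst hr2
      have hσ0 := congrArg Prod.snd hr2
      simp only at hf hσ0
      choose ρf hρ1 hρ2 using fun j : Fin (ar1 F1Sym.f) =>
        ih j (fun p => σ (j.val :: p)) (isRun_child _ _ _ _ hσ j)
      refine ⟨glue (ar := arU ar') (Sum.inl F1Sym.f) ρf (stD q1 (i' + 1)), ?_, ?_⟩
      · refine isRun_glue _ (Sum.inl F1Sym.f) c' ρf _ (fun j => hρ1 j) ?_
        refine Or.inr (Or.inl ⟨i', hi'1, hik, hα0, ?_⟩)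
        have : (fun j : Fin (arU ar' (Sum.inl F1Sym.f)) => ρf j []) =
            (fun _ : Fin (arU ar' (Sum.inl F1Sym.f)) => stD q1 i') := by
          funext j
          rw [hρ2 j, show σ [j.val] = i' from by simpa using congrFun hf j]
        rw [this]
      · show stD q1 (i' + 1) = stD q1 (σ [])
        rw [hσ0]
    · injection hr with hr1 hr2; exact F1Sym.noConfusion hr1
  | @gnode c c' hc ih =>
    intro σ hσ
    have h0 := hσ [] F1Sym.g c rfl
    simp only [AmAut, Set.mem_setOf_eq] at h0
    rcases h0 with hr | ⟨i', hi'1, hik, hα0, hr⟩ | ⟨i', hi'1, hik, hα0, hr⟩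
    · injection hr with hr1 hr2; exact F1Sym.noConfusion hr1
    · injection hr with hr1 hr2; exact F1Sym.noConfusion hr1
    · injection hr with hr1 hr2
      have hf := congrArg Prod.fst hr2
      have hσ0 := congrArg Prod.snd hr2
      simp only at hf hσ0
      choose ρf hρ1 hρ2 using fun j : Fin (ar1 F1Sym.g) =>
        ih j (fun p => σ (j.val :: p)) (isRun_child _ _ _ _ hσ j)
      refine ⟨glue (ar := arU ar') (Sum.inl F1Sym.g) ρf (stD q1 (i' + 1)), ?_, ?_⟩
      · refine isRun_glue _ (Sum.inl F1Sym.g) c' ρf _ (fun j => hρ1 j) ?_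
        refine Or.inr (Or.inr ⟨i', hi'1, hik, hα0, ?_⟩)
        have : (fun j : Fin (arU ar' (Sum.inl F1Sym.g)) => ρf j []) =
            (fun j : Fin (arU ar' (Sum.inl F1Sym.g)) =>
            if j.val = 2 then stD q1 1 else stD q1 i') := by
          funext j
          rw [hρ2 j, show σ [j.val] = if j.val = 2 then 1 else i' from by
            simpa using congrFun hf j]
          split <;> rfl
        rw [this]
      · show stD q1 (i' + 1) = stD q1 (σ [])
        rw [hσ0]

end Main2
/-- Let `m ≥ 1` with binary representation `α₁ … α_k`, let `B` be a tree
automaton over a ranked alphabet `F'` disjoint from `F₁` with unique final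
state `q1`, and let `D = (Q ∪ Q₁, (Δ ∪ Δ₁) \ {A → q₁}, {q_k})` over `F₁ ∪ F'`
(the state `q₁` of `A_m` being identified with `q1`, so `Q ∩ Q₁ = {q₁}`).
Then the terms accepted by `D` are exactly the terms obtained from the unique
term `T` of `L(A_m)` by replacing each of its `m` leaves (all labelled `A`)
by some term of `L(B)`, the replacing terms being chosen independently. -/
theorem DAut_language {S' : Type*} (ar' : S' → ℕ) {Q : Type*}
    (B : TreeAut S' ar' Q) (q1 : Q) (hBf : B.final = {q1})
    (α : ℕ → Bool) (k m : ℕ) (hk : 1 ≤ k) (hα : α 1 = true)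
    (hm : m = ∑ i ∈ Finset.Icc 1 k, if α i then 2 ^ (k - i) else 0)
    (T : Term F1Sym ar1) (hT : Accepts (AmAut α k) T)
    (hTu : ∀ T' : Term F1Sym ar1, Accepts (AmAut α k) T' → T' = T) :
    ∀ t : Term (F1Sym ⊕ S') (arU ar'),
      Accepts (DAut ar' B q1 α k) t ↔
      Repl {u | ∃ tb : Term S' ar', Accepts B tb ∧ u = embed ar' tb} T t := by
  intro t
  constructor
  · rintro ⟨ρ, hρ, hfin⟩
    have hfk : ρ [] = stD q1 k := by simpa [DAut] using hfin
    obtain ⟨T', ⟨σ, hσ, hσk⟩, hrep⟩ := fwd B q1 hBf α k t ρ hρ k hk hfk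
    have hTT : T' = T := hTu T' ⟨σ, hσ, by simp [AmAut, hσk]⟩
    rwa [hTT] at hrep
  · intro hrep
    obtain ⟨σ, hσ, hσf⟩ := hT
    have hσk : σ [] = k := by simpa [AmAut] using hσf
    obtain ⟨ρ, hρ, hρ0⟩ := bwd B q1 hBf α k T t hrep σ hσ
    exact ⟨ρ, hρ, by rw [hρ0, hσk]; simp [DAut]⟩
end
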